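/- For α > 2 and s > 0, the integral ∫₀^∞ (1 - 1/(1 + s·x^{-α}))·2πλ·x dx converges and equals πλ·s^{2/α}·(2π/α)/sin(2π/α), i.e., πλ·s^{2/α}/sinc(2/α) where sinc(t) = sin(πt)/(πt). -/

import Mathlib

/-!
Since `1 - 1 / (1 + s x^{-α}) = 1 / (1 + x^α / s)`, the substitution `y = x²` followed by the
scaling `y = s^{2/α} u` reduces the integral to `π λ s^{2/α} ∫₀^∞ du / (1 + u^{α/2})`.
With `u = y^{2/α}` the latter becomes `(2/α) ∫₀^∞ y^{c-1} / (1 + y) dy` for `c = 2/α`, and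
`y = x / (1 - x)` turns this into the beta integral `B(c, 1 - c) = Γ(c) Γ(1 - c)`, which is
`π / sin (π c)` by Euler's reflection formula.
Every change of variables holds without integrability assumptions, and the resulting value is
nonzero, which gives convergence for free.
-/

open MeasureTheory Real Set

theorem integral_Ioo_rpow_mul_one_sub_rpow_neg {c : ℝ} (hc₀ : 0 < c) (hc₁ : c < 1) :
    ∫ x in Ioo (0 : ℝ) 1, x ^ (c - 1) * (1 - x) ^ (-c) = π / sin (π * c) := by
  have hGamma : Complex.betaIntegral c (1 - c) = π / Complex.sin (π * c) := by
    rw [← Complex.Gamma_mul_Gamma_one_sub, Complex.Gamma_mul_Gamma_eq_betaIntegral (by simpa)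
      (by simpa), add_sub_cancel, Complex.Gamma_one, one_mul]
  have hreal : Complex.betaIntegral c (1 - c) =
      ∫ x in (0 : ℝ)..1, x ^ (c - 1) * (1 - x) ^ (-c) := by
    rw [Complex.betaIntegral, ← intervalIntegral.integral_ofReal]
    refine intervalIntegral.integral_congr fun x hx => ?_
    rw [uIcc_of_le zero_le_one] at hx
    push_cast
    rw [Complex.ofReal_cpow hx.1, Complex.ofReal_cpow (sub_nonneg.2 hx.2)]
    push_cast
    ring_nf
  rw [← integral_Ioc_eq_integral_Ioo, ← intervalIntegral.integral_of_le zero_le_one]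
  exact_mod_cast hreal.symm.trans hGamma

theorem image_div_one_sub_Ioo : (fun x : ℝ => x / (1 - x)) '' Ioo 0 1 = Ioi 0 := by
  ext y
  constructor
  · rintro ⟨x, ⟨hx₀, hx₁⟩, rfl⟩
    exact div_pos hx₀ (sub_pos.2 hx₁)
  · intro (hy : 0 < y)
    refine ⟨y / (1 + y), ⟨by positivity, (div_lt_one (by positivity)).2 (by linarith)⟩, ?_⟩
    field_simp
    ring

theorem hasDerivAt_div_one_sub {x : ℝ} (hx : x ≠ 1) :
    HasDerivAt (fun x : ℝ => x / (1 - x)) ((1 - x) ^ 2)⁻¹ x := by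
  refine ((hasDerivAt_id' x).fun_div ((hasDerivAt_const x 1).fun_sub (hasDerivAt_id' x))
    (sub_ne_zero.2 hx.symm)).congr_deriv ?_
  ring

theorem integral_Ioi_rpow_sub_one_div_one_add {c : ℝ} (hc₀ : 0 < c) (hc₁ : c < 1) :
    ∫ t in Ioi (0 : ℝ), t ^ (c - 1) / (1 + t) = π / sin (π * c) := by
  have hinj : InjOn (fun x : ℝ => x / (1 - x)) (Ioo 0 1) := fun a ha b hb hab => by
    have := sub_pos.2 ha.2
    have := sub_pos.2 hb.2
    field_simp at hab
    linarith
  rw [← image_div_one_sub_Ioo, integral_image_eq_integral_abs_deriv_smul measurableSet_Ioo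
    (fun x hx => (hasDerivAt_div_one_sub hx.2.ne).hasDerivWithinAt) hinj,
    ← integral_Ioo_rpow_mul_one_sub_rpow_neg hc₀ hc₁]
  refine setIntegral_congr_fun measurableSet_Ioo fun x ⟨hx₀, hx₁⟩ => ?_
  have hy : 0 < 1 - x := sub_pos.2 hx₁
  rw [smul_eq_mul, abs_of_pos (by positivity), div_rpow hx₀.le hy.le, rpow_sub_one hy.ne',
    rpow_neg hy.le]
  field_simp
  ring

theorem integral_Ioi_one_div_one_add_rpow {p : ℝ} (hp : 1 < p) :
    ∫ u in Ioi (0 : ℝ), 1 / (1 + u ^ p) = π / p / sin (π / p) := by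
  have hp₀ : 0 < p := one_pos.trans hp
  calc ∫ u in Ioi (0 : ℝ), 1 / (1 + u ^ p)
      = ∫ u in Ioi (0 : ℝ),
          (p * u ^ (p - 1)) • (p⁻¹ * ((u ^ p) ^ (p⁻¹ - 1) / (1 + u ^ p))) := by
        refine setIntegral_congr_fun measurableSet_Ioi fun u (hu : 0 < u) => ?_
        rw [← rpow_mul hu.le, mul_sub, mul_inv_cancel₀ hp₀.ne', mul_one, smul_eq_mul]
        have hcancel : u ^ (p - 1) * u ^ (1 - p) = 1 := by
          rw [← rpow_add hu, show p - 1 + (1 - p) = 0 by ring, rpow_zero]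
        field_simp
        exact hcancel.symm
    _ = ∫ y in Ioi (0 : ℝ), p⁻¹ * (y ^ (p⁻¹ - 1) / (1 + y)) :=
        integral_comp_rpow_Ioi_of_pos (g := fun y => p⁻¹ * (y ^ (p⁻¹ - 1) / (1 + y))) hp₀
    _ = π / p / sin (π / p) := by
        rw [integral_const_mul, integral_Ioi_rpow_sub_one_div_one_add (inv_pos.2 hp₀)
          (inv_lt_one_of_one_lt₀ hp), ← div_eq_mul_inv]
        ring

theorem integral_Ioi_one_div_one_add_div_rpow {p b : ℝ} (hp : 1 < p) (hb : 0 < b) :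
    ∫ u in Ioi (0 : ℝ), 1 / (1 + (u / b) ^ p) = b * (π / p / sin (π / p)) := by
  have h := integral_comp_mul_left_Ioi (fun u => 1 / (1 + (u / b) ^ p)) 0 hb
  simp only [mul_div_cancel_left₀ _ hb.ne', mul_zero, integral_Ioi_one_div_one_add_rpow hp,
    smul_eq_mul] at h
  rw [h, mul_inv_cancel_left₀ hb.ne']

theorem integral_Ioi_one_sub_one_div_one_add_mul_rpow_neg_mul {α s : ℝ} (hα : 2 < α)
    (hs : 0 < s) :
    ∫ x in Ioi (0 : ℝ), (1 - 1 / (1 + s * x ^ (-α))) * x =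
      s ^ (2 / α) * (2 * π / α / sin (2 * π / α)) / 2 := by
  have hα₀ : 0 < α := two_pos.trans hα
  calc ∫ x in Ioi (0 : ℝ), (1 - 1 / (1 + s * x ^ (-α))) * x
      = ∫ x in Ioi (0 : ℝ), ((2 : ℝ) * x ^ ((2 : ℝ) - 1)) •
          (2⁻¹ * (1 / (1 + (x ^ (2 : ℝ) / s ^ (2 / α)) ^ (α / 2)))) := by
        refine setIntegral_congr_fun measurableSet_Ioi fun x (hx : 0 < x) => ?_
        have hscale : (x ^ (2 : ℝ) / s ^ (2 / α)) ^ (α / 2) = x ^ α / s := by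
          rw [div_rpow (by positivity) (by positivity), ← rpow_mul hx.le, ← rpow_mul hs.le]
          field_simp
          rw [rpow_one]
        rw [hscale, rpow_neg hx.le, smul_eq_mul, show (2 : ℝ) - 1 = 1 by norm_num, rpow_one]
        field_simp
        ring
    _ = ∫ y in Ioi (0 : ℝ), 2⁻¹ * (1 / (1 + (y / s ^ (2 / α)) ^ (α / 2))) :=
        integral_comp_rpow_Ioi_of_pos
          (g := fun y => 2⁻¹ * (1 / (1 + (y / s ^ (2 / α)) ^ (α / 2)))) two_pos
    _ = s ^ (2 / α) * (2 * π / α / sin (2 * π / α)) / 2 := by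
        rw [integral_const_mul, integral_Ioi_one_div_one_add_div_rpow (by linarith)
          (by positivity), show π / (α / 2) = 2 * π / α by field_simp]
        ring

theorem integrableOn_Ioi_one_sub_one_div_one_add_mul_rpow_neg_mul {α s : ℝ} (hα : 2 < α)
    (hs : 0 < s) : IntegrableOn (fun x : ℝ => (1 - 1 / (1 + s * x ^ (-α))) * x) (Ioi 0) := by
  refine Integrable.of_integral_ne_zero ?_
  rw [integral_Ioi_one_sub_one_div_one_add_mul_rpow_neg_mul hα hs]
  have : 0 < sin (2 * π / α) := sin_pos_of_pos_of_lt_pi (by positivity)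
    ((div_lt_iff₀ (by linarith)).2 (by nlinarith [pi_pos]))
  positivity

theorem stmt_4_general (α s lam : ℝ) (hα : 2 < α) (hs : 0 < s) :
    IntegrableOn (fun x : ℝ => (1 - 1 / (1 + s * x ^ (-α))) * (2 * π * lam * x)) (Ioi 0) ∧
    (∫ x in Ioi (0 : ℝ), (1 - 1 / (1 + s * x ^ (-α))) * (2 * π * lam * x)) =
      π * lam * s ^ (2 / α) * ((2 * π / α) / Real.sin (2 * π / α)) ∧
    π * lam * s ^ (2 / α) * ((2 * π / α) / Real.sin (2 * π / α)) =
      π * lam * s ^ (2 / α) / (Real.sin (π * (2 / α)) / (π * (2 / α))) := by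
  have hfactor : (fun x : ℝ => (1 - 1 / (1 + s * x ^ (-α))) * (2 * π * lam * x)) =
      fun x => 2 * π * lam * ((1 - 1 / (1 + s * x ^ (-α))) * x) := by
    funext x
    ring
  refine ⟨?_, ?_, ?_⟩
  · rw [hfactor]
    exact (integrableOn_Ioi_one_sub_one_div_one_add_mul_rpow_neg_mul hα hs).const_mul _
  · rw [hfactor, integral_const_mul, integral_Ioi_one_sub_one_div_one_add_mul_rpow_neg_mul hα hs]
    ring
  · rw [show π * (2 / α) = 2 * π / α by ring, div_div_eq_mul_div]
    ring

/-- For `α > 2`, `s > 0`, `λ > 0`, the integral `∫₀^∞ (1 - 1/(1 + s x^{-α}))·2πλx dx` converges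
and equals `πλ s^{2/α} (2π/α)/sin(2π/α) = πλ s^{2/α}/sinc(2/α)`. -/
theorem stmt_4 (α s lam : ℝ) (hα : 2 < α) (hs : 0 < s) (hlam : 0 < lam) :
    IntegrableOn (fun x : ℝ => (1 - 1 / (1 + s * x ^ (-α))) * (2 * π * lam * x)) (Ioi 0) ∧
    (∫ x in Ioi (0 : ℝ), (1 - 1 / (1 + s * x ^ (-α))) * (2 * π * lam * x)) =
      π * lam * s ^ (2 / α) * ((2 * π / α) / Real.sin (2 * π / α)) ∧
    π * lam * s ^ (2 / α) * ((2 * π / α) / Real.sin (2 * π / α)) =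
      π * lam * s ^ (2 / α) / (Real.sin (π * (2 / α)) / (π * (2 / α))) :=
  stmt_4_general α s lam hα hs
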